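/- On the Lie algebra l₁ = (0,0,0,12,13−24,14+23,0), for the 3-form ν = −π_*(ι_{e₇}τ) obtained from any closed 4-form τ (with π : l₁ → l₁/⟨e₇⟩ the projection), the associated endomorphism K_ν of the 6-dimensional quotient preserves the flag span(e₁,e₂) ⊂ span(e₁,e₂,e₃,e₄); in particular span(e₃,e₄,e₅,e₆) is invariant under the almost complex structure J_ν whenever ν is a negative stable 3-form. -/

import Mathlib

open scoped BigOperators

noncomputable section

/-- The basis `k`-form `e^{S 0} ∧ ⋯ ∧ e^{S (k-1)}` on `Fin n → ℝ` (determinant of the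
selected coordinates). -/
def eForm {n k : ℕ} (S : Fin k → Fin n) :
    AlternatingMap ℝ (Fin n → ℝ) ℝ (Fin k) :=
  (Matrix.detRowAlternating :
      AlternatingMap ℝ (Fin k → ℝ) ℝ (Fin k)).compLinearMap (LinearMap.funLeft ℝ ℝ S)

/-- The basis form `f^{S 0} ∧ ⋯`, in the coframe dual to a basis `b` of `V`. -/
def eFormB {V : Type*} [AddCommGroup V] [Module ℝ V] {n k : ℕ}
    (b : Module.Basis (Fin n) ℝ V) (S : Fin k → Fin n) : AlternatingMap ℝ V ℝ (Fin k) :=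
  (eForm S).compLinearMap b.equivFun.toLinearMap

/-- Value of the wedge product `α ∧ β` at a tuple of vectors. -/
def wedgeVal {V : Type*} [AddCommGroup V] [Module ℝ V] {p q : ℕ}
    (α : AlternatingMap ℝ V ℝ (Fin p)) (β : AlternatingMap ℝ V ℝ (Fin q))
    (x : Fin (p + q) → V) : ℝ :=
  ((p.factorial * q.factorial : ℕ) : ℝ)⁻¹ *
    ∑ σ : Equiv.Perm (Fin (p + q)),
      ((Equiv.Perm.sign σ : ℤ) : ℝ) *
        (α fun i => x (σ (Fin.castAdd q i))) * (β fun j => x (σ (Fin.natAdd p j)))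

/-- Value of the triple wedge product `α ∧ β ∧ γ` at a tuple of vectors. -/
def wedge3Val {V : Type*} [AddCommGroup V] [Module ℝ V] {p q r : ℕ}
    (α : AlternatingMap ℝ V ℝ (Fin p)) (β : AlternatingMap ℝ V ℝ (Fin q))
    (γ : AlternatingMap ℝ V ℝ (Fin r)) (x : Fin (p + q + r) → V) : ℝ :=
  ((p.factorial * q.factorial * r.factorial : ℕ) : ℝ)⁻¹ *
    ∑ σ : Equiv.Perm (Fin (p + q + r)),
      ((Equiv.Perm.sign σ : ℤ) : ℝ) *
        (α fun i => x (σ (Fin.castAdd r (Fin.castAdd q i)))) *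
        (β fun j => x (σ (Fin.castAdd r (Fin.natAdd p j)))) *
        (γ fun l => x (σ (Fin.natAdd (p + q) l)))

/-- Value of the Chevalley–Eilenberg differential of a `(k+1)`-form at a `(k+2)`-tuple of
vectors, for the Lie bracket `B`:
`(dκ)(x₀,…,x_{k+1}) = ∑_{i<j} (-1)^{i+j} κ([xᵢ,xⱼ], x₀,…,x̂ᵢ,…,x̂ⱼ,…)`. -/
def ceDVal {V : Type*} [AddCommGroup V] [Module ℝ V] (B : V → V → V) {k : ℕ}
    (κ : AlternatingMap ℝ V ℝ (Fin (k + 1))) (x : Fin (k + 2) → V) : ℝ :=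
  ∑ i : Fin (k + 2), ∑ m : Fin (k + 1),
    if (i : ℕ) ≤ (m : ℕ) then
      (-1 : ℝ) ^ ((i : ℕ) + ((i.succAbove m : Fin (k + 2)) : ℕ)) *
        κ (Fin.cons (B (x i) (x (i.succAbove m)))
            fun l : Fin k => x (i.succAbove (m.succAbove l)))
    else 0

/-- Inner product of `k`-forms on `Fin n → ℝ` making the standard basis forms orthonormal. -/
def formInner {n k : ℕ} (α β : AlternatingMap ℝ (Fin n → ℝ) ℝ (Fin k)) : ℝ :=
  ((k.factorial : ℕ) : ℝ)⁻¹ *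
    ∑ f : Fin k → Fin n, (α fun i => Pi.single (f i) 1) * (β fun i => Pi.single (f i) 1)

/-- Inner product of `k`-forms on `V` for which the coframe dual to `b` is orthonormal. -/
def formInnerB {V : Type*} [AddCommGroup V] [Module ℝ V] {n k : ℕ}
    (b : Module.Basis (Fin n) ℝ V) (α β : AlternatingMap ℝ V ℝ (Fin k)) : ℝ :=
  ((k.factorial : ℕ) : ℝ)⁻¹ *
    ∑ f : Fin k → Fin n, (α fun i => b (f i)) * (β fun i => b (f i))

/-- The standard positive (`G₂`) 3-form
`e¹²⁷+e³⁴⁷+e⁵⁶⁷+e¹³⁵−e¹⁴⁶−e²³⁶−e²⁴⁵` on `ℝ⁷` (indices written 1-based). -/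
def phiStd : AlternatingMap ℝ (Fin 7 → ℝ) ℝ (Fin 3) :=
  eForm ![0, 1, 6] + eForm ![2, 3, 6] + eForm ![4, 5, 6] + eForm ![0, 2, 4] -
    eForm ![0, 3, 5] - eForm ![1, 2, 5] - eForm ![1, 3, 4]

/-- The standard `G₂` dual 4-form
`e¹²³⁴+e¹²⁵⁶+e¹³⁶⁷+e¹⁴⁵⁷+e²³⁵⁷−e²⁴⁶⁷+e³⁴⁵⁶` on `ℝ⁷`. -/
def psiStd : AlternatingMap ℝ (Fin 7 → ℝ) ℝ (Fin 4) :=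
  eForm ![0, 1, 2, 3] + eForm ![0, 1, 4, 5] + eForm ![0, 2, 5, 6] + eForm ![0, 3, 4, 6] +
    eForm ![1, 2, 4, 6] - eForm ![1, 3, 5, 6] + eForm ![2, 3, 4, 5]

/-- The standard `G₂` 3-form in the coframe dual to a basis `b` of a 7-dimensional space;
a 3-form `φ` is positive (defines a `G₂`-structure) iff `φ = phiStdB b` for some basis `b`,
which is then orthonormal for the induced metric `g_φ`. -/
def phiStdB {V : Type*} [AddCommGroup V] [Module ℝ V] (b : Module.Basis (Fin 7) ℝ V) :
    AlternatingMap ℝ V ℝ (Fin 3) :=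
  phiStd.compLinearMap b.equivFun.toLinearMap

/-- The dual 4-form `⋆_φ φ` of the `G₂`-structure `phiStdB b`. -/
def psiStdB {V : Type*} [AddCommGroup V] [Module ℝ V] (b : Module.Basis (Fin 7) ℝ V) :
    AlternatingMap ℝ V ℝ (Fin 4) :=
  psiStd.compLinearMap b.equivFun.toLinearMap

/-- The standard negative stable 3-form `−f²⁴⁶+f¹³⁶+f¹⁴⁵+f²³⁵` on `ℝ⁶`. -/
def negStd : AlternatingMap ℝ (Fin 6 → ℝ) ℝ (Fin 3) :=
  -eForm ![1, 3, 5] + eForm ![0, 2, 5] + eForm ![0, 3, 4] + eForm ![1, 2, 4]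

/-- The standard negative stable 3-form in the coframe dual to a basis `b`;
a 3-form `ρ` on a 6-dimensional space is negative (λ(ρ)<0) iff `ρ = negStdB b` for some `b`. -/
def negStdB {V : Type*} [AddCommGroup V] [Module ℝ V] (b : Module.Basis (Fin 6) ℝ V) :
    AlternatingMap ℝ V ℝ (Fin 3) :=
  negStd.compLinearMap b.equivFun.toLinearMap

/-- The matrix of the Hitchin endomorphism `K_ρ` of a 3-form `ρ` on a 6-dimensional space,
relative to a basis `b` (trivializing `Λ⁶V*` by the dual volume form of `b`):
`ι_{b c} ρ ∧ ρ = ∑ₐ (−1)ᵃ (kMat b ρ a c) • ι_{b a} vol`. -/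
def kMat {V : Type*} [AddCommGroup V] [Module ℝ V] (b : Module.Basis (Fin 6) ℝ V)
    (ρ : AlternatingMap ℝ V ℝ (Fin 3)) (a c : Fin 6) : ℝ :=
  (-1 : ℝ) ^ (a : ℕ) *
    wedgeVal (ρ.curryLeft (b c)) ρ fun l : Fin 5 => b (a.succAbove l)

/-- The Hitchin quartic invariant `λ(ρ) = (1/6) tr(K_ρ²)`, trivialized by the basis `b`. -/
def lambdaB {V : Type*} [AddCommGroup V] [Module ℝ V] (b : Module.Basis (Fin 6) ℝ V)
    (ρ : AlternatingMap ℝ V ℝ (Fin 3)) : ℝ :=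
  (6 : ℝ)⁻¹ * ∑ a : Fin 6, ∑ c : Fin 6, kMat b ρ a c * kMat b ρ c a

/-- The standard volume form `e¹∧⋯∧e⁷` on `ℝ⁷`. -/
def vol7 : AlternatingMap ℝ (Fin 7 → ℝ) ℝ (Fin 7) :=
  eForm (fun i => i)


/-- The Lie bracket of `l₁ = (0,0,0,12,13−24,14+23,0)` on `ℝ⁷` (so `de⁴ = e¹²`,
`de⁵ = e¹³ − e²⁴`, `de⁶ = e¹⁴ + e²³`, other `deⁱ = 0`; `e₇` is central). -/
def brkL1 : (Fin 7 → ℝ) → (Fin 7 → ℝ) → (Fin 7 → ℝ) := fun x y =>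
  ![0, 0, 0, -(x 0 * y 1 - x 1 * y 0),
    -((x 0 * y 2 - x 2 * y 0) - (x 1 * y 3 - x 3 * y 1)),
    -((x 0 * y 3 - x 3 * y 0) + (x 1 * y 2 - x 2 * y 1)), 0]

/-!
Give `e₁, e₂` weight 0, `e₃, e₄` weight 1 and `e₅, e₆` weight 2. Since `e₇` is central,
`ι_{e₇}τ` is closed together with `τ`, and six components of `d(ι_{e₇}τ) = 0` show that `ν` has
no component of total weight `≥ 4`. The entry `K_ν(a, c)` is a sum of products
`ν(e_c, ·, ·) ν(·, ·, ·)` over the basis vectors other than `e_a`, of total weight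
`6 - w(a) + w(c)`; when `w(a) < w(c)` this exceeds `2 · 3`, so one of the two factors vanishes.
-/

namespace AlternatingMap

variable {R M N : Type*} [CommRing R] [AddCommGroup M] [Module R M] [AddCommGroup N] [Module R N]

theorem map_vecCons_neg {n : ℕ} (f : M [⋀^Fin n.succ]→ₗ[R] N) (m : Fin n → M) (x : M) :
    f (Matrix.vecCons (-x) m) = -f (Matrix.vecCons x m) := by
  simpa using f.map_vecCons_smul m (-1) x

theorem map_vecCons_zero {n : ℕ} (f : M [⋀^Fin n.succ]→ₗ[R] N) (m : Fin n → M) :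
    f (Matrix.vecCons 0 m) = 0 :=
  f.map_coord_zero 0 rfl

section Three

variable (f : M [⋀^Fin 3]→ₗ[R] N) (a b c : M)

theorem map_vec3_eq_zero_01 : f ![a, a, c] = 0 :=
  f.map_eq_zero_of_eq _ (i := 0) (j := 1) rfl (by decide)

theorem map_vec3_eq_zero_02 : f ![a, b, a] = 0 :=
  f.map_eq_zero_of_eq _ (i := 0) (j := 2) rfl (by decide)

theorem map_vec3_swap_01 : f ![b, a, c] = -f ![a, b, c] := by
  rw [← f.map_swap _ (i := 0) (j := 1) (by decide)]
  congr 1; ext i; fin_cases i <;> rfl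

theorem map_vec3_swap_12 : f ![a, c, b] = -f ![a, b, c] := by
  rw [← f.map_swap _ (i := 1) (j := 2) (by decide)]
  congr 1; ext i; fin_cases i <;> rfl

end Three

theorem map_comp_eq_zero_of_weight {ι : Type*} [LinearOrder ι] {n : ℕ}
    (f : M [⋀^Fin n]→ₗ[R] N) (v : ι → M) (w : ι → ℕ) (m : ℕ)
    (h : ∀ g : Fin n → ι, StrictMono g → m < ∑ i, w (g i) → f (v ∘ g) = 0)
    (g : Fin n → ι) (hg : m < ∑ i, w (g i)) : f (v ∘ g) = 0 := by
  by_cases hinj : Function.Injective g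
  · set π := Tuple.sort g
    have hmono : StrictMono (g ∘ π) :=
      (Tuple.monotone_sort g).strictMono_of_injective (hinj.comp π.injective)
    have hπ := h (g ∘ π) hmono (by rwa [Function.comp_def, Equiv.sum_comp π fun i => w (g i)])
    rwa [← Function.comp_assoc, f.map_perm, smul_eq_zero_iff_eq] at hπ
  · exact f.map_eq_zero_of_not_injective _ fun hvg => hinj hvg.of_comp

end AlternatingMap

theorem Fin.snoc_single_zero {M : Type*} [Zero M] {n : ℕ} (i : Fin n) (x : M) :
    (Fin.snoc (Pi.single i x) 0 : Fin (n + 1) → M) = Pi.single i.castSucc x := by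
  ext j
  cases j using Fin.lastCases with
  | last => simp [Fin.castSucc_ne_last]
  | cast j => simp [Pi.single_apply]

theorem ceDVal_curryLeft {V : Type*} [AddCommGroup V] [Module ℝ V] (B : V → V → V) {k : ℕ}
    (κ : AlternatingMap ℝ V ℝ (Fin (k + 2))) (z : V) (hz : ∀ y, B z y = 0)
    (x : Fin (k + 2) → V) :
    ceDVal B (κ.curryLeft z) x = -ceDVal B κ (Fin.cons z x) := by
  have hswap : ∀ (a : V) (w : Fin k → V),
      κ (Fin.cons a (Fin.cons z w)) = -κ.curryLeft z (Fin.cons a w) := by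
    intro a w
    rw [AlternatingMap.curryLeft_apply_apply, ← κ.map_swap _ (show (0 : Fin (k + 2)) ≠ 1 by simp)]
    congr 1
    ext i
    cases i using Fin.cases with
    | zero => rfl
    | succ i => cases i using Fin.cases <;> rfl
  have hrest : ∀ (i : Fin (k + 2)) (m : Fin (k + 1)),
      (fun l => (Fin.cons z x : Fin (k + 3) → V) (i.succ.succAbove (m.succ.succAbove l))) =
        Fin.cons z fun l => x (i.succAbove (m.succAbove l)) := by
    intro i m
    ext l
    cases l using Fin.cases <;>
      simp only [Fin.succ_succAbove_zero, Fin.succ_succAbove_succ, Fin.cons_zero, Fin.cons_succ]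
  simp only [ceDVal, Fin.sum_univ_succ (n := k + 2), Fin.cons_zero, Fin.cons_succ, hz,
    κ.map_coord_zero 0 (Fin.cons_zero _ _), mul_zero, ite_self, Finset.sum_const_zero, zero_add,
    ← Finset.sum_neg_distrib]
  refine Finset.sum_congr rfl fun i _ => ?_
  simp only [Fin.sum_univ_succ (n := k + 1), Fin.val_succ, Fin.val_zero, Fin.succ_succAbove_succ,
    Fin.cons_succ, hrest, hswap, add_le_add_iff_right, Nat.le_zero, Nat.add_one_ne_zero,
    if_false, neg_zero, zero_add]
  refine Finset.sum_congr rfl fun m _ => ?_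
  split_ifs <;> ring

theorem ceDVal_four {V : Type*} [AddCommGroup V] [Module ℝ V] (B : V → V → V)
    (κ : AlternatingMap ℝ V ℝ (Fin 3)) (x : Fin 4 → V) :
    ceDVal B κ x =
      -κ ![B (x 0) (x 1), x 2, x 3] + κ ![B (x 0) (x 2), x 1, x 3] -
        κ ![B (x 0) (x 3), x 1, x 2] - κ ![B (x 1) (x 2), x 0, x 3] +
        κ ![B (x 1) (x 3), x 0, x 2] - κ ![B (x 2) (x 3), x 0, x 1] := by
  have hcons : ∀ (v : V) (f : Fin 2 → V), κ (Fin.cons v f) = κ ![v, f 0, f 1] := fun v f => by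
    congr; ext i; fin_cases i <;> rfl
  simp only [ceDVal, Fin.sum_univ_succ, Fin.sum_univ_zero, hcons]
  simp (config := { decide := true }) [Fin.succAbove]
  ring

theorem brkL1_single_zero_one : brkL1 (Pi.single 0 1) (Pi.single 1 1) = -Pi.single 3 1 := by
  ext k; fin_cases k <;> simp [brkL1]

theorem brkL1_single_zero_two : brkL1 (Pi.single 0 1) (Pi.single 2 1) = -Pi.single 4 1 := by
  ext k; fin_cases k <;> simp [brkL1]

theorem brkL1_single_zero_three : brkL1 (Pi.single 0 1) (Pi.single 3 1) = -Pi.single 5 1 := by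
  ext k; fin_cases k <;> simp [brkL1]

theorem brkL1_single_one_two : brkL1 (Pi.single 1 1) (Pi.single 2 1) = -Pi.single 5 1 := by
  ext k; fin_cases k <;> simp [brkL1]

theorem brkL1_single_one_three : brkL1 (Pi.single 1 1) (Pi.single 3 1) = Pi.single 4 1 := by
  ext k; fin_cases k <;> simp [brkL1]

theorem brkL1_single_two_three : brkL1 (Pi.single 2 1) (Pi.single 3 1) = 0 := by
  ext k; fin_cases k <;> simp [brkL1]

theorem brkL1_single_four_right (x : Fin 7 → ℝ) : brkL1 x (Pi.single 4 1) = 0 := by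
  ext k; fin_cases k <;> simp [brkL1]

theorem brkL1_single_five_right (x : Fin 7 → ℝ) : brkL1 x (Pi.single 5 1) = 0 := by
  ext k; fin_cases k <;> simp [brkL1]

theorem brkL1_single_six_left (y : Fin 7 → ℝ) : brkL1 (Pi.single 6 1) y = 0 := by
  ext k; fin_cases k <;> simp [brkL1]

def l1Weight : Fin 6 → ℕ := ![0, 0, 1, 1, 2, 2]

open AlternatingMap in
/-- Each component is read off from `dσ = 0` on a 4-tuple of basis vectors, where all but one
or two terms drop out. -/
theorem l1_closed_components (σ : AlternatingMap ℝ (Fin 7 → ℝ) ℝ (Fin 3))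
    (hσ : ∀ x, ceDVal brkL1 σ x = 0) :
    σ ![Pi.single 0 1, Pi.single 4 1, Pi.single 5 1] = 0 ∧
      σ ![Pi.single 1 1, Pi.single 4 1, Pi.single 5 1] = 0 ∧
      σ ![Pi.single 2 1, Pi.single 4 1, Pi.single 5 1] = 0 ∧
      σ ![Pi.single 3 1, Pi.single 4 1, Pi.single 5 1] = 0 ∧
      σ ![Pi.single 2 1, Pi.single 3 1, Pi.single 4 1] = 0 ∧
      σ ![Pi.single 2 1, Pi.single 3 1, Pi.single 5 1] = 0 := by
  have h045 := hσ ![Pi.single 0 1, Pi.single 1 1, Pi.single 3 1, Pi.single 5 1]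
  have h145 := hσ ![Pi.single 0 1, Pi.single 1 1, Pi.single 3 1, Pi.single 4 1]
  have h245 := hσ ![Pi.single 0 1, Pi.single 2 1, Pi.single 3 1, Pi.single 4 1]
  have h345 := hσ ![Pi.single 0 1, Pi.single 2 1, Pi.single 3 1, Pi.single 5 1]
  have h234 := hσ ![Pi.single 0 1, Pi.single 1 1, Pi.single 2 1, Pi.single 4 1]
  have h235 := hσ ![Pi.single 0 1, Pi.single 1 1, Pi.single 2 1, Pi.single 5 1]
  simp only [ceDVal_four, Matrix.cons_val, brkL1_single_zero_one, brkL1_single_zero_two,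
    brkL1_single_zero_three, brkL1_single_one_two, brkL1_single_one_three, brkL1_single_two_three,
    brkL1_single_four_right, brkL1_single_five_right, map_vecCons_neg, map_vecCons_zero,
    map_vec3_eq_zero_01, map_vec3_eq_zero_02, neg_neg, neg_zero, add_zero, sub_zero,
    zero_add, zero_sub] at h045 h145 h245 h345 h234 h235
  have e045 : σ ![Pi.single 0 1, Pi.single 4 1, Pi.single 5 1] = 0 := by
    linarith [map_vec3_swap_01 σ (Pi.single 0 1) (Pi.single 4 1) (Pi.single 5 1)]
  have e145 : σ ![Pi.single 1 1, Pi.single 4 1, Pi.single 5 1] = 0 := by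
    linarith [map_vec3_swap_01 σ (Pi.single 1 1) (Pi.single 5 1) (Pi.single 4 1),
      map_vec3_swap_12 σ (Pi.single 1 1) (Pi.single 4 1) (Pi.single 5 1)]
  refine ⟨e045, e145, ?_, ?_, ?_, ?_⟩
  · linarith [map_vec3_swap_01 σ (Pi.single 2 1) (Pi.single 5 1) (Pi.single 4 1),
      map_vec3_swap_12 σ (Pi.single 2 1) (Pi.single 4 1) (Pi.single 5 1)]
  · linarith [map_vec3_swap_01 σ (Pi.single 3 1) (Pi.single 4 1) (Pi.single 5 1)]
  · linarith [map_vec3_swap_01 σ (Pi.single 2 1) (Pi.single 3 1) (Pi.single 4 1),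
      map_vec3_swap_01 σ (Pi.single 0 1) (Pi.single 5 1) (Pi.single 4 1),
      map_vec3_swap_12 σ (Pi.single 0 1) (Pi.single 4 1) (Pi.single 5 1)]
  · linarith [map_vec3_swap_01 σ (Pi.single 2 1) (Pi.single 3 1) (Pi.single 5 1),
      map_vec3_swap_01 σ (Pi.single 1 1) (Pi.single 4 1) (Pi.single 5 1)]

theorem l1_closed_apply_eq_zero_of_weight (σ : AlternatingMap ℝ (Fin 7 → ℝ) ℝ (Fin 3))
    (hσ : ∀ x, ceDVal brkL1 σ x = 0) (g : Fin 3 → Fin 6) (hg : StrictMono g)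
    (hw : 3 < ∑ i, l1Weight (g i)) :
    σ ((fun i : Fin 6 => Pi.single i.castSucc 1) ∘ g) = 0 := by
  obtain ⟨e045, e145, e245, e345, e234, e235⟩ := l1_closed_components σ hσ
  obtain ⟨i, j, k, rfl⟩ : ∃ i j k, g = ![i, j, k] :=
    ⟨g 0, g 1, g 2, by ext x; fin_cases x <;> rfl⟩
  have hij : i < j := hg (show (0 : Fin 3) < 1 by decide)
  have hjk : j < k := hg (show (1 : Fin 3) < 2 by decide)
  rw [Fin.sum_univ_three] at hw
  have hcases : ∀ i j k : Fin 6, i < j → j < k → 3 < l1Weight i + l1Weight j + l1Weight k →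
      (i = 0 ∨ i = 1 ∨ i = 2 ∨ i = 3) ∧ j = 4 ∧ k = 5 ∨ i = 2 ∧ j = 3 ∧ (k = 4 ∨ k = 5) := by
    decide
  rw [← FinVec.map_eq]
  change σ ![Pi.single i.castSucc 1, Pi.single j.castSucc 1, Pi.single k.castSucc 1] = 0
  rcases hcases i j k hij hjk hw with
    ⟨rfl | rfl | rfl | rfl, rfl, rfl⟩ | ⟨rfl, rfl, rfl | rfl⟩ <;> simpa

theorem kMat_eq_zero_of_weight {V : Type*} [AddCommGroup V] [Module ℝ V]
    (b : Module.Basis (Fin 6) ℝ V) (ρ : AlternatingMap ℝ V ℝ (Fin 3)) (w : Fin 6 → ℕ) (m : ℕ)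
    (hρ : ∀ g : Fin 3 → Fin 6, m < ∑ i, w (g i) → ρ (b ∘ g) = 0) {a c : Fin 6}
    (hac : 2 * m + w a < w c + ∑ i, w i) : kMat b ρ a c = 0 := by
  rw [kMat, wedgeVal, Finset.sum_eq_zero, mul_zero, mul_zero]
  intro σ _
  set s : Fin (2 + 3) → Fin 6 := fun l => a.succAbove (σ l)
  have hsum : w a + (∑ i : Fin 2, w (s (Fin.castAdd 3 i)) + ∑ j : Fin 3, w (s (Fin.natAdd 2 j))) =
      ∑ i, w i := by
    rw [← Fin.sum_univ_add fun l => w (s l), Equiv.sum_comp σ fun l => w (a.succAbove l)]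
    exact (Fin.sum_univ_succAbove w a).symm
  have hleft : ρ.curryLeft (b c) (fun i => b (s (Fin.castAdd 3 i))) =
      ρ (b ∘ Fin.cons c fun i => s (Fin.castAdd 3 i)) := by
    rw [AlternatingMap.curryLeft_apply_apply, Fin.comp_cons]; rfl
  by_cases hm : m < w c + ∑ i : Fin 2, w (s (Fin.castAdd 3 i))
  · rw [hleft, hρ _ (by simpa only [Fin.sum_univ_succ, Fin.cons_zero, Fin.cons_succ]),
      mul_zero, zero_mul]
  · exact mul_eq_zero_of_right _ (hρ (fun j => s (Fin.natAdd 2 j)) (by omega))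

/-- On `l₁ = (0,0,0,12,13−24,14+23,0)`, for the 3-form
`ν = −π_*(ι_{e₇} τ)` on the 6-dimensional quotient `l₁/⟨e₇⟩ ≅ ℝ⁶` obtained from any closed
4-form `τ`, the matrix of the Hitchin endomorphism `K_ν` satisfies `K_ν(a,b) = 0` for
`a ∈ {1,2}`, `b ≥ 3`, and for `a ∈ {3,4}`, `b ∈ {5,6}` (1-based indices); in particular
`span(e₃,e₄,e₅,e₆)` is invariant under the almost complex structure
`J_ν = K_ν / √(−λ(ν))` whenever `ν` is negative stable. -/
theorem l1_K_matrix_block_triangular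
    (τ : AlternatingMap ℝ (Fin 7 → ℝ) ℝ (Fin 4))
    (hτ : ∀ x : Fin 5 → (Fin 7 → ℝ), ceDVal brkL1 τ x = 0)
    (ν : AlternatingMap ℝ (Fin 6 → ℝ) ℝ (Fin 3))
    (hν : ∀ y : Fin 3 → (Fin 6 → ℝ),
      ν y = -((τ.curryLeft (Pi.single 6 1)) fun i => Fin.snoc (y i) 0)) :
    (∀ a c : Fin 6, (a : ℕ) < 2 → 2 ≤ (c : ℕ) →
      kMat (Pi.basisFun ℝ (Fin 6)) ν a c = 0) ∧
    (∀ a c : Fin 6, ((a : ℕ) = 2 ∨ (a : ℕ) = 3) → 4 ≤ (c : ℕ) →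
      kMat (Pi.basisFun ℝ (Fin 6)) ν a c = 0) ∧
    (lambdaB (Pi.basisFun ℝ (Fin 6)) ν < 0 →
      ∀ a c : Fin 6, (a : ℕ) < 2 → 2 ≤ (c : ℕ) →
        (Real.sqrt (-(lambdaB (Pi.basisFun ℝ (Fin 6)) ν)))⁻¹ *
          kMat (Pi.basisFun ℝ (Fin 6)) ν a c = 0) := by
  set σ := τ.curryLeft (Pi.single 6 1)
  have hσ : ∀ x, ceDVal brkL1 σ x = 0 := fun x => by
    rw [ceDVal_curryLeft brkL1 τ _ brkL1_single_six_left, hτ, neg_zero]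
  have hνw : ∀ g : Fin 3 → Fin 6, 3 < ∑ i, l1Weight (g i) →
      ν (Pi.basisFun ℝ (Fin 6) ∘ g) = 0 := by
    intro g hg
    have hσw := σ.map_comp_eq_zero_of_weight _ l1Weight 3
      (l1_closed_apply_eq_zero_of_weight σ hσ) g hg
    rw [hν]
    simp only [Function.comp_apply, Pi.basisFun_apply, Fin.snoc_single_zero]
    exact neg_eq_zero.mpr hσw
  have hK : ∀ a c : Fin 6, l1Weight a < l1Weight c → kMat (Pi.basisFun ℝ (Fin 6)) ν a c = 0 := by
    intro a c hac
    refine kMat_eq_zero_of_weight _ ν l1Weight 3 hνw ?_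
    rw [show ∑ i, l1Weight i = 6 from rfl]
    omega
  have hK₁ : ∀ a c : Fin 6, (a : ℕ) < 2 → 2 ≤ (c : ℕ) → kMat (Pi.basisFun ℝ (Fin 6)) ν a c = 0 :=
    fun a c ha hc => hK a c (by revert a c; decide)
  refine ⟨hK₁, fun a c ha hc => hK a c (by revert a c; decide), fun _ a c ha hc => ?_⟩
  rw [hK₁ a c ha hc, mul_zero]

end
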